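/- Suppose ‖H − A ⊗ B‖_F = ‖R P Rᵀ − (R a)(R b)ᵀ‖_F for an invertible matrix R, where A, B are built linearly from vectors a, b. Then the minimizer over rank-one factors of ‖H − A ⊗ B‖_F is attained by choosing a = √σ₁ R⁻¹ ũ₁ and b = √σ₁ R⁻¹ ṽ₁, where σ₁, ũ₁, ṽ₁ are the largest singular value and singular vectors of P̃ = R P Rᵀ. -/

import Mathlib

/-!
By hypothesis the objective equals `‖M - (R a) (R b)ᵀ‖_F` with `M = R P Rᵀ = ∑ σₖ uₖ vₖᵀ`.
Expanding, `‖M - x yᵀ‖² = ‖M‖² - 2 xᵀ M y + ‖x‖² ‖y‖²`, and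
`xᵀ M y = ∑ σₖ (uₖ ⬝ x) (vₖ ⬝ y) ≤ σ₁ ‖x‖ ‖y‖` by Cauchy–Schwarz and Bessel's inequality, so
completing the square in `‖x‖ ‖y‖` gives `‖M - x yᵀ‖² ≥ ‖M‖² - σ₁²`. Since `R a₀ = √σ₁ u₁` and
`R b₀ = √σ₁ v₁`, the point `(a₀, b₀)` attains this bound.
-/

open Matrix Kronecker

section RankOneApproximation

variable {ι m n : Type*} [Fintype ι] [Fintype m] [Fintype n]

theorem sum_sq_sub_vecMulVec (M : Matrix m n ℝ) (x : m → ℝ) (y : n → ℝ) :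
    ∑ i, ∑ j, ((M - vecMulVec x y) i j) ^ 2 =
      ∑ i, ∑ j, (M i j) ^ 2 - 2 * (x ⬝ᵥ M *ᵥ y) + (x ⬝ᵥ x) * (y ⬝ᵥ y) := by
  have hexpand : ∀ i j, ((M - vecMulVec x y) i j) ^ 2 =
      (M i j) ^ 2 - 2 * (x i * (M i j * y j)) + (x i * x i) * (y j * y j) := fun i j => by
    rw [Matrix.sub_apply, vecMulVec_apply]; ring
  simp only [hexpand, Finset.sum_add_distrib, Finset.sum_sub_distrib, ← Finset.mul_sum,
    Finset.sum_mul_sum, dotProduct, mulVec]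

theorem dotProduct_sum_smul_vecMulVec_mulVec (σ : ι → ℝ) (u : ι → m → ℝ) (v : ι → n → ℝ)
    (x : m → ℝ) (y : n → ℝ) :
    x ⬝ᵥ (∑ k, σ k • vecMulVec (u k) (v k)) *ᵥ y = ∑ k, σ k * ((x ⬝ᵥ u k) * (v k ⬝ᵥ y)) := by
  simp only [sum_mulVec, smul_mulVec, vecMulVec_mulVec, dotProduct_sum, dotProduct_smul,
    smul_eq_mul, op_smul_eq_mul]

theorem sum_sq_dotProduct_le [DecidableEq ι] {u : ι → n → ℝ}
    (hu : ∀ i j, u i ⬝ᵥ u j = if i = j then 1 else 0) (x : n → ℝ) :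
    ∑ k, (u k ⬝ᵥ x) ^ 2 ≤ x ⬝ᵥ x := by
  have hON : Orthonormal ℝ fun k => WithLp.toLp 2 (u k) := by
    rw [orthonormal_iff_ite]
    intro i j
    rw [EuclideanSpace.inner_eq_star_dotProduct, star_trivial, dotProduct_comm]
    exact hu i j
  have hBessel := hON.sum_inner_products_le (WithLp.toLp 2 x) (s := Finset.univ)
  rw [EuclideanSpace.norm_sq_eq] at hBessel
  simp only [EuclideanSpace.inner_eq_star_dotProduct, star_trivial, Real.norm_eq_abs, sq_abs]
    at hBessel
  convert hBessel using 2 with k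
  · rw [dotProduct_comm]
  · simp only [dotProduct, sq]

variable [DecidableEq ι] {σ : ι → ℝ} {u : ι → m → ℝ} {v : ι → n → ℝ} {M : Matrix m n ℝ}
  (hu : ∀ i j, u i ⬝ᵥ u j = if i = j then 1 else 0)
  (hv : ∀ i j, v i ⬝ᵥ v j = if i = j then 1 else 0)
  (hM : M = ∑ k, σ k • vecMulVec (u k) (v k))
include hu hv hM

theorem dotProduct_mulVec_le_of_svd (hσ : ∀ k, 0 ≤ σ k) {z : ι} (hz : ∀ k, σ k ≤ σ z)
    (x : m → ℝ) (y : n → ℝ) :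
    x ⬝ᵥ M *ᵥ y ≤ σ z * (√(x ⬝ᵥ x) * √(y ⬝ᵥ y)) := by
  rw [hM, dotProduct_sum_smul_vecMulVec_mulVec]
  calc ∑ k, σ k * ((x ⬝ᵥ u k) * (v k ⬝ᵥ y))
      ≤ ∑ k, σ z * (|u k ⬝ᵥ x| * |v k ⬝ᵥ y|) := Finset.sum_le_sum fun k _ => by
        rw [dotProduct_comm x, ← abs_mul]
        exact (mul_le_mul_of_nonneg_left (le_abs_self _) (hσ k)).trans
          (mul_le_mul_of_nonneg_right (hz k) (abs_nonneg _))
    _ = σ z * ∑ k, |u k ⬝ᵥ x| * |v k ⬝ᵥ y| := by rw [Finset.mul_sum]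
    _ ≤ σ z * (√(∑ k, |u k ⬝ᵥ x| ^ 2) * √(∑ k, |v k ⬝ᵥ y| ^ 2)) :=
        mul_le_mul_of_nonneg_left (Real.sum_mul_le_sqrt_mul_sqrt _ _ _) (hσ z)
    _ ≤ σ z * (√(x ⬝ᵥ x) * √(y ⬝ᵥ y)) := by
        simp only [sq_abs]
        exact mul_le_mul_of_nonneg_left (mul_le_mul (Real.sqrt_le_sqrt (sum_sq_dotProduct_le hu x))
          (Real.sqrt_le_sqrt (sum_sq_dotProduct_le hv y)) (Real.sqrt_nonneg _)
          (Real.sqrt_nonneg _)) (hσ z)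

theorem sum_sq_sub_sq_le_sum_sq_sub_vecMulVec (hσ : ∀ k, 0 ≤ σ k) {z : ι}
    (hz : ∀ k, σ k ≤ σ z) (x : m → ℝ) (y : n → ℝ) :
    ∑ i, ∑ j, (M i j) ^ 2 - σ z ^ 2 ≤ ∑ i, ∑ j, ((M - vecMulVec x y) i j) ^ 2 := by
  rw [sum_sq_sub_vecMulVec]
  have hbound := dotProduct_mulVec_le_of_svd hu hv hM hσ hz x y
  have hx : 0 ≤ x ⬝ᵥ x := Finset.sum_nonneg fun i _ => mul_self_nonneg (x i)
  have hy : 0 ≤ y ⬝ᵥ y := Finset.sum_nonneg fun j _ => mul_self_nonneg (y j)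
  have hnorms : (x ⬝ᵥ x) * (y ⬝ᵥ y) = (√(x ⬝ᵥ x) * √(y ⬝ᵥ y)) ^ 2 := by
    rw [mul_pow, Real.sq_sqrt hx, Real.sq_sqrt hy]
  nlinarith [sq_nonneg (√(x ⬝ᵥ x) * √(y ⬝ᵥ y) - σ z)]

theorem sum_sq_sub_vecMulVec_smul_of_svd (z : ι) {c d : ℝ} (hcd : c * d = σ z) :
    ∑ i, ∑ j, ((M - vecMulVec (c • u z) (d • v z)) i j) ^ 2 =
      ∑ i, ∑ j, (M i j) ^ 2 - σ z ^ 2 := by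
  rw [sum_sq_sub_vecMulVec]
  nth_rw 2 [hM]
  rw [dotProduct_sum_smul_vecMulVec_mulVec]
  simp only [smul_dotProduct, dotProduct_smul, hu, hv, smul_eq_mul, mul_ite, mul_one, mul_zero,
    if_true, eq_comm (a := z), Finset.sum_ite_eq', Finset.mem_univ]
  linear_combination (c * d - σ z) * hcd

end RankOneApproximation

theorem mulVec_smul_nonsing_inv_mulVec {n R : Type*} [Fintype n] [DecidableEq n] [CommRing R]
    {A : Matrix n n R} (hA : IsUnit A.det) (c : R) (w : n → R) :
    A *ᵥ (c • A⁻¹ *ᵥ w) = c • w := by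
  rw [mulVec_smul, mulVec_mulVec, mul_nonsing_inv A hA, one_mulVec]

/-- If `‖H − A(a) ⊗ B(b)‖_F = ‖R P Rᵀ − (Ra)(Rb)ᵀ‖_F` for all `a, b` with `R`
invertible, then the minimum of `‖H − A(a) ⊗ B(b)‖_F` over `a, b` is attained
at `a = √σ₁ R⁻¹ ũ₁`, `b = √σ₁ R⁻¹ ṽ₁`, built from the SVD
`P̃ = R P Rᵀ = ∑ σᵢ ũᵢ ṽᵢᵀ`. -/
theorem kronecker_approx_minimizer (n m r : ℕ) (hr : 0 < r)
    (R P : Matrix (Fin n) (Fin n) ℝ) (hR : IsUnit R.det)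
    (A B : (Fin n → ℝ) → Matrix (Fin m) (Fin m) ℝ)
    (H : Matrix (Fin m × Fin m) (Fin m × Fin m) ℝ)
    (hid : ∀ a b : Fin n → ℝ,
      Real.sqrt (∑ p, ∑ q, ((H - (A a) ⊗ₖ (B b)) p q) ^ 2) =
        Real.sqrt (∑ i, ∑ j,
          ((R * P * Rᵀ - Matrix.vecMulVec (R.mulVec a) (R.mulVec b)) i j) ^ 2))
    (σ : Fin r → ℝ) (u v : Fin r → Fin n → ℝ)
    (hσpos : ∀ i, 0 < σ i)
    (hσdec : ∀ i j : Fin r, i ≤ j → σ j ≤ σ i)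
    (hu : ∀ i j : Fin r, (∑ k, u i k * u j k) = if i = j then 1 else 0)
    (hv : ∀ i j : Fin r, (∑ k, v i k * v j k) = if i = j then 1 else 0)
    (hSVD : R * P * Rᵀ = ∑ i, σ i • Matrix.vecMulVec (u i) (v i))
    (a₀ b₀ : Fin n → ℝ)
    (ha₀ : a₀ = Real.sqrt (σ ⟨0, hr⟩) • R⁻¹.mulVec (u ⟨0, hr⟩))
    (hb₀ : b₀ = Real.sqrt (σ ⟨0, hr⟩) • R⁻¹.mulVec (v ⟨0, hr⟩)) :
    ∀ a b : Fin n → ℝ,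
      Real.sqrt (∑ p, ∑ q, ((H - (A a₀) ⊗ₖ (B b₀)) p q) ^ 2) ≤
        Real.sqrt (∑ p, ∑ q, ((H - (A a) ⊗ₖ (B b)) p q) ^ 2) := by
  intro a b
  set z : Fin r := ⟨0, hr⟩
  have hσ : ∀ k, 0 ≤ σ k := fun k => (hσpos k).le
  have hz : ∀ k, σ k ≤ σ z := fun k => hσdec z k (Nat.zero_le k.val)
  have hsqrt : √(σ z) * √(σ z) = σ z := Real.mul_self_sqrt (hσ z)
  rw [hid, hid, ha₀, hb₀, mulVec_smul_nonsing_inv_mulVec hR, mulVec_smul_nonsing_inv_mulVec hR,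
    sum_sq_sub_vecMulVec_smul_of_svd hu hv hSVD z hsqrt]
  exact Real.sqrt_le_sqrt (sum_sq_sub_sq_le_sum_sq_sub_vecMulVec hu hv hSVD hσ hz _ _)
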